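/- In every execution of the online collaborative caching algorithm on a request sequence v_1, …, v_n (n ≥ 1), and for every nonempty finite set W* ⊆ X containing the root r, the total credit satisfies Σ_{j=1}^n ĉ(v_j) ≤ (log₂(n) + 1) · Σ_{w∈W*} f_w + (2·log₂(n) + 1) · Σ_{j=1}^n d(W*, v_j), where for each request v the credit ĉ(v) equals f_w − p(w) + d(w,v) if v caused the content to be cached at a new node w (with p the potentials just before v arrived), and ĉ(v) = d(W_v, v) otherwise, W_v being the cache set when v was processed. -/

import Mathlib

open Finset

/-- The setting of the online collaborative caching problem: a finite set `X` of nodes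
(base stations together with the root `r` representing the Internet), a pseudometric
UA-cost `d` satisfying the triangle inequality, and nonnegative caching costs `f`
with `f r = 0` (the root always holds the content). -/
structure CachingSetting (X : Type*) [Fintype X] where
  d : X → X → ℝ
  f : X → ℝ
  r : X
  d_nonneg : ∀ x y, 0 ≤ d x y
  d_self : ∀ x, d x x = 0
  d_symm : ∀ x y, d x y = d y x
  d_triangle : ∀ x y z, d x z ≤ d x y + d y z
  f_nonneg : ∀ k, 0 ≤ f k
  f_root : f r = 0

namespace CachingSetting

variable {X : Type*} [Fintype X] [DecidableEq X] (S : CachingSetting X)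

/-- UA cost of serving a request at `v` from the nearest node of the cache set `W`:
`D W v = min_{k ∈ W} d k v`. -/
noncomputable def D (W : Finset X) (v : X) : ℝ :=
  if h : W.Nonempty then W.inf' h (fun k => S.d k v) else 0

/-- Potential of node `k` with respect to the cache set `W` and the first `j`
requests of the request sequence `v`:
`pot v W j k = ∑_{i < j} max(D W (v i) − d k (v i), 0)`. -/
noncomputable def pot (v : ℕ → X) (W : Finset X) (j : ℕ) (k : X) : ℝ :=
  ∑ i ∈ Finset.range j, max (S.D W (v i) - S.d k (v i)) 0

/-- One step of the online algorithm on request `v i`, turning the cache set `W`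
into `W'`.  After updating the potentials (they become the potentials with respect
to `W` and the first `i + 1` requests), either all potentials are at most the caching
costs and no new cache is opened, or the content is cached at a maximizer `w` of
`p(k) − f k` with `p(w) − f w > 0`. -/
def Step (v : ℕ → X) (i : ℕ) (W W' : Finset X) : Prop :=
  ((∀ k, S.pot v W (i + 1) k ≤ S.f k) ∧ W' = W) ∨
    (∃ w, (∀ k, S.pot v W (i + 1) k - S.f k ≤ S.pot v W (i + 1) w - S.f w) ∧
      S.f w < S.pot v W (i + 1) w ∧ W' = insert w W)

/-- `IsExecution S n v Ws` says that `Ws j` is the cache set maintained by the online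
algorithm after fully processing the first `j` of the `n` requests `v 0, v 1, …`
(initially the cache set is `{r}`); ties may be broken arbitrarily. -/
def IsExecution (n : ℕ) (v : ℕ → X) (Ws : ℕ → Finset X) : Prop :=
  Ws 0 = {S.r} ∧ ∀ i < n, S.Step v i (Ws i) (Ws (i + 1))

/-- One step of the online algorithm on request `v i`, together with the credit `c`
assigned to the request: `c = f w − p(w) + d(w, v i)` if the request causes the
content to be cached at a new node `w` (with `p` the potentials just before the
request arrived), and `c = d(W, v i)` otherwise (`W` then being the cache set when
the request is processed). -/
def StepWithCredit (v : ℕ → X) (i : ℕ) (W W' : Finset X) (c : ℝ) : Prop :=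
  ((∀ k, S.pot v W (i + 1) k ≤ S.f k) ∧ W' = W ∧ c = S.D W (v i)) ∨
    (∃ w, (∀ k, S.pot v W (i + 1) k - S.f k ≤ S.pot v W (i + 1) w - S.f w) ∧
      S.f w < S.pot v W (i + 1) w ∧ W' = insert w W ∧
      c = S.f w - S.pot v W i w + S.d w (v i))

/-- `IsExecutionWithCredits S n v Ws c` says that `Ws j` is the cache set maintained
by the online algorithm after fully processing the first `j` of the `n` requests
`v 0, v 1, …` (initially `{r}`), and `c i` is the credit of request `v i`; ties may
be broken arbitrarily. -/
def IsExecutionWithCredits (n : ℕ) (v : ℕ → X) (Ws : ℕ → Finset X) (c : ℕ → ℝ) : Prop :=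
  Ws 0 = {S.r} ∧ ∀ i < n, S.StepWithCredit v i (Ws i) (Ws (i + 1)) (c i)

end CachingSetting

/-!
Send every request to its nearest node of `W*`; the requests sent to `w` form the cluster of
`w`. Let `y` be any node and `T` any set of earlier requests. By the triangle inequality each
`l ∈ T` raised the potential of `y` by at least `t - 2 d(y, v_l)`, where
`t = d(W, v_i) - d(y, v_i)`, so `p(y) ≥ (|T| + 1) t - 2 ∑_T d(y, v_l)` once `v_i` arrives.
Before each request all potentials are at most the caching costs, and a new cache maximizes
`p - f`; hence the credit of `v_i` is at most `d(W, v_i)` and at most `d(W, v_i) + f_y - p(y)`.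
The mean of these two bounds with weights `|T|` and `1` gives
`ĉ(v_i) ≤ d(y, v_i) + (f_y + 2 ∑_T d(y, v_l)) / (|T| + 1)`.
Take `y` the centre of the cluster of `v_i` and `T` its earlier requests: summed over a
cluster `A` in arrival order, the caching cost is paid with weight `H_|A| ≤ ln |A| + 1` and each
distance with weight at most `H_|A| - 1 ≤ ln |A|`.
-/

lemma Real.one_div_add_one_le_log_add_one_sub_log {x : ℝ} (hx : 0 < x) :
    1 / (x + 1) ≤ Real.log (x + 1) - Real.log x := by
  have h := Real.one_sub_inv_le_log_of_pos (x := (x + 1) / x) (by positivity)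
  rwa [Real.log_div (by positivity) hx.ne', inv_div, one_sub_div (by positivity),
    add_sub_cancel_left] at h

lemma Real.log_natCast_le_logb_two {m n : ℕ} (hmn : m ≤ n) :
    Real.log m ≤ Real.logb 2 n := by
  have hmn' : Real.log m ≤ Real.log n := by
    rcases m.eq_zero_or_pos with rfl | hm
    · simpa using Real.log_natCast_nonneg n
    · exact Real.log_le_log (by positivity) (by exact_mod_cast hmn)
  rw [← Real.log_div_log]
  exact hmn'.trans <| le_div_self (Real.log_natCast_nonneg n) (Real.log_pos one_lt_two)
    (by linarith [Real.log_two_lt_d9])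

lemma Finset.sum_prefix_div_card_succ_le {α : Type*} [LinearOrder α] (A : Finset α)
    (x : α → ℝ) (hx : ∀ a, 0 ≤ x a) {F : ℝ} (hF : 0 ≤ F) :
    ∑ a ∈ A, (F + 2 * ∑ b ∈ A with b < a, x b) / (#{b ∈ A | b < a} + 1) ≤
      (Real.log #A + 1) * F + 2 * Real.log #A * ∑ a ∈ A, x a := by
  induction A using Finset.induction_on_max with
  | empty => simpa using hF
  | insert a A ha ih =>
    have haA : a ∉ A := fun h => lt_irrefl a (ha a h)
    have hlt : ∀ b ∈ A, {c ∈ insert a A | c < b} = {c ∈ A | c < b} := fun b hb => by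
      rw [filter_insert, if_neg (ha b hb).not_gt]
    have hmax : {c ∈ insert a A | c < a} = A := by
      rw [filter_insert, if_neg (lt_irrefl a), filter_true_of_mem ha]
    have hrest : ∑ b ∈ A, (F + 2 * ∑ c ∈ insert a A with c < b, x c) /
        (#{c ∈ insert a A | c < b} + 1 : ℝ) =
        ∑ b ∈ A, (F + 2 * ∑ c ∈ A with c < b, x c) / (#{c ∈ A | c < b} + 1) :=
      sum_congr rfl fun b hb => by rw [hlt b hb]
    rw [sum_insert haA, sum_insert haA, hmax, card_insert_of_notMem haA, hrest]
    set m : ℕ := #A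
    rcases m.eq_zero_or_pos with hm | hm
    · simp [m, card_eq_zero.mp hm]
    have hstep := mul_le_mul_of_nonneg_right
      (Real.one_div_add_one_le_log_add_one_sub_log (x := m) (by positivity))
      (add_nonneg hF (mul_nonneg zero_le_two (sum_nonneg fun b (_ : b ∈ A) => hx b)))
    have hlog : 0 ≤ Real.log (m + 1 : ℕ) := Real.log_natCast_nonneg _
    push_cast at hlog ⊢
    rw [one_div_mul_eq_div] at hstep
    nlinarith [hx a]

namespace CachingSetting

variable {X : Type*} [Fintype X] (S : CachingSetting X)

lemma D_nonneg (W : Finset X) (x : X) : 0 ≤ S.D W x := by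
  unfold D
  split_ifs
  exacts [le_inf' _ _ fun k _ => S.d_nonneg k x, le_rfl]

lemma D_le {W : Finset X} {k : X} (hk : k ∈ W) (x : X) : S.D W x ≤ S.d k x := by
  rw [D, dif_pos ⟨k, hk⟩]
  exact inf'_le _ hk

lemma exists_mem_d_eq_D {W : Finset X} (hW : W.Nonempty) (x : X) :
    ∃ k ∈ W, S.d k x = S.D W x := by
  rw [D, dif_pos hW]
  obtain ⟨k, hk, h⟩ := exists_mem_eq_inf' hW fun k => S.d k x
  exact ⟨k, hk, h.symm⟩

lemma D_le_D_add_d (W : Finset X) (y x : X) : S.D W x ≤ S.D W y + S.d y x := by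
  rcases W.eq_empty_or_nonempty with rfl | hW
  · simpa [D] using S.d_nonneg y x
  obtain ⟨k, hk, he⟩ := S.exists_mem_d_eq_D hW y
  rw [← he]
  exact (S.D_le hk x).trans (S.d_triangle k y x)

lemma D_anti {W W' : Finset X} (hWW' : W ⊆ W') (hW : W.Nonempty) (x : X) :
    S.D W' x ≤ S.D W x := by
  obtain ⟨k, hk, he⟩ := S.exists_mem_d_eq_D hW x
  exact he ▸ S.D_le (hWW' hk) x

lemma D_sub_d_sub_two_mul_d_le (W : Finset X) (x y z : X) :
    S.D W x - S.d y x - 2 * S.d y z ≤ S.D W z - S.d y z := by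
  have := S.D_le_D_add_d W y x
  have := S.D_le_D_add_d W z y
  have := S.d_symm z y
  linarith

lemma pot_succ (v : ℕ → X) (W : Finset X) (i : ℕ) (k : X) :
    S.pot v W (i + 1) k = S.pot v W i k + max (S.D W (v i) - S.d k (v i)) 0 :=
  sum_range_succ _ _

lemma d_lt_D_of_pot_lt_pot_succ {v : ℕ → X} {W : Finset X} {i : ℕ} {k : X}
    (h : S.pot v W i k < S.pot v W (i + 1) k) : S.d k (v i) < S.D W (v i) := by
  by_contra! hle
  rw [S.pot_succ, max_eq_right (by linarith)] at h
  linarith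

lemma card_succ_mul_le_pot (v : ℕ → X) (W : Finset X) {i : ℕ} (y : X) {T : Finset ℕ}
    (hT : T ⊆ range i) :
    (#T + 1) * (S.D W (v i) - S.d y (v i)) - 2 * ∑ l ∈ T, S.d y (v l) ≤
      S.pot v W (i + 1) y := by
  have hiT : i ∉ T := fun h => by simpa using hT h
  have hsub : insert i T ⊆ range (i + 1) := by
    intro l hl
    rcases mem_insert.mp hl with rfl | h
    · exact self_mem_range_succ l
    · exact mem_range.mpr ((mem_range.mp (hT h)).trans (Nat.lt_succ_self i))
  calc (#T + 1) * (S.D W (v i) - S.d y (v i)) - 2 * ∑ l ∈ T, S.d y (v l)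
      = (S.D W (v i) - S.d y (v i)) +
          ∑ l ∈ T, (S.D W (v i) - S.d y (v i) - 2 * S.d y (v l)) := by
        rw [sum_sub_distrib, sum_const, nsmul_eq_mul, mul_sum]; ring
    _ ≤ max (S.D W (v i) - S.d y (v i)) 0 +
          ∑ l ∈ T, max (S.D W (v l) - S.d y (v l)) 0 :=
        add_le_add (le_max_left _ _) <| sum_le_sum fun l _ =>
          (S.D_sub_d_sub_two_mul_d_le W (v i) y (v l)).trans (le_max_left _ _)
    _ = ∑ l ∈ insert i T, max (S.D W (v l) - S.d y (v l)) 0 := by rw [sum_insert hiT]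
    _ ≤ S.pot v W (i + 1) y :=
        sum_le_sum_of_subset_of_nonneg hsub fun _ _ _ => le_max_right _ _

lemma pot_insert_succ_le [DecidableEq X] (v : ℕ → X) {W : Finset X} (hW : W.Nonempty)
    (i : ℕ) (w k : X) :
    S.pot v (insert w W) (i + 1) k ≤ S.pot v W i k + max (S.d w (v i) - S.d k (v i)) 0 := by
  rw [S.pot_succ, pot, pot]
  gcongr with j
  · exact S.D_anti (subset_insert w W) hW _
  · exact S.D_le (mem_insert_self w W) _

variable [DecidableEq X] {S} {v : ℕ → X} {W W' : Finset X} {i : ℕ} {c : ℝ}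

lemma StepWithCredit.pot_le_f (h : S.StepWithCredit v i W W' c)
    (hinv : ∀ k, S.pot v W i k ≤ S.f k) (hW : W.Nonempty) (k : X) :
    S.pot v W' (i + 1) k ≤ S.f k := by
  rcases h with ⟨hf, rfl, -⟩ | ⟨w, hmax, hopen, rfl, -⟩
  · exact hf k
  have hwD := S.d_lt_D_of_pot_lt_pot_succ ((hinv w).trans_lt hopen)
  have hk := S.pot_insert_succ_le v hW i w k
  rcases le_or_gt (S.d w (v i)) (S.d k (v i)) with hwk | hkw
  · rw [max_eq_right (by linarith)] at hk
    linarith [hinv k]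
  · have hkD : S.d k (v i) < S.D W (v i) := hkw.trans hwD
    rw [max_eq_left (by linarith)] at hk
    have := hmax k
    rw [S.pot_succ, S.pot_succ, max_eq_left (by linarith), max_eq_left (by linarith)] at this
    linarith [hinv w]

lemma StepWithCredit.credit_le (h : S.StepWithCredit v i W W' c)
    (hinv : ∀ k, S.pot v W i k ≤ S.f k) (y : X) :
    c ≤ S.D W (v i) ∧ c ≤ S.D W (v i) + S.f y - S.pot v W (i + 1) y := by
  rcases h with ⟨hf, -, rfl⟩ | ⟨w, hmax, hopen, -, rfl⟩
  · exact ⟨le_rfl, by linarith [hf y]⟩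
  · have hw := S.pot_succ v W i w
    rw [max_eq_left (sub_nonneg.mpr (S.d_lt_D_of_pot_lt_pot_succ ((hinv w).trans_lt hopen)).le)]
      at hw
    constructor <;> linarith [hmax y]

lemma StepWithCredit.credit_le_d_add_div (h : S.StepWithCredit v i W W' c)
    (hinv : ∀ k, S.pot v W i k ≤ S.f k) (y : X) {T : Finset ℕ} (hT : T ⊆ range i) :
    c ≤ S.d y (v i) + (S.f y + 2 * ∑ l ∈ T, S.d y (v l)) / (#T + 1) := by
  obtain ⟨hD, hslack⟩ := h.credit_le hinv y
  have hpot := S.card_succ_mul_le_pot v W y hT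
  set t := S.D W (v i) - S.d y (v i)
  have hT0 : (0 : ℝ) ≤ #T := Nat.cast_nonneg _
  rw [← sub_le_iff_le_add', le_div_iff₀ (by positivity)]
  -- the credit minus `d y (v i)` is a weighted mean of two bounds, with weights `#T` and `1`
  nlinarith [mul_le_mul_of_nonneg_left (show c - S.d y (v i) ≤ t by linarith) hT0]

variable {n : ℕ} {Ws : ℕ → Finset X} {cs : ℕ → ℝ}

lemma StepWithCredit.subset (h : S.StepWithCredit v i W W' c) : W ⊆ W' := by
  rcases h with ⟨-, rfl, -⟩ | ⟨w, -, -, rfl, -⟩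
  exacts [subset_rfl, subset_insert w W]

lemma IsExecutionWithCredits.root_mem (h : S.IsExecutionWithCredits n v Ws cs) :
    ∀ {i}, i ≤ n → S.r ∈ Ws i
  | 0, _ => h.1 ▸ mem_singleton_self S.r
  | i + 1, hi => (h.2 i hi).subset (h.root_mem (Nat.le_of_succ_le hi))

lemma IsExecutionWithCredits.pot_le_f (h : S.IsExecutionWithCredits n v Ws cs) :
    ∀ {i}, i ≤ n → ∀ k, S.pot v (Ws i) i k ≤ S.f k
  | 0, _, k => by simpa [pot] using S.f_nonneg k
  | i + 1, hi, k => (h.2 i hi).pot_le_f (h.pot_le_f (Nat.le_of_succ_le hi))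
      ⟨S.r, h.root_mem (Nat.le_of_succ_le hi)⟩ k

end CachingSetting

theorem caching_credit_bound_general {X : Type*} [Fintype X] [DecidableEq X]
    (S : CachingSetting X) (n : ℕ) (v : ℕ → X) (Ws : ℕ → Finset X)
    (c : ℕ → ℝ) (hexec : S.IsExecutionWithCredits n v Ws c)
    (Wstar : Finset X) (hr : S.r ∈ Wstar) :
    ∑ i ∈ Finset.range n, c i ≤
      (Real.logb 2 (n : ℝ) + 1) * ∑ w ∈ Wstar, S.f w +
        (2 * Real.logb 2 (n : ℝ) + 1) * ∑ j ∈ Finset.range n, S.D Wstar (v j) := by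
  choose φ hφW hφ using fun i => S.exists_mem_d_eq_D ⟨S.r, hr⟩ (v i)
  set x := fun l => S.D Wstar (v l)
  set L := Real.logb 2 (n : ℝ)
  set A := fun w => {i ∈ range n | φ i = w}
  set G := fun w i => (S.f w + 2 * ∑ l ∈ A w with l < i, x l) / (#{l ∈ A w | l < i} + 1 : ℝ)
  have hcredit : ∀ i ∈ range n, c i ≤ x i + G (φ i) i := by
    intro i hi
    have := (hexec.2 i (mem_range.mp hi)).credit_le_d_add_div
      (hexec.pot_le_f (mem_range.mp hi).le) (φ i) (T := {l ∈ A (φ i) | l < i})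
      fun l hl => mem_range.mpr (mem_filter.mp hl).2
    rwa [hφ i, sum_congr rfl fun l hl => by
      rw [← (mem_filter.mp (mem_filter.mp hl).1).2, hφ l]] at this
  have hcluster : ∀ w ∈ Wstar,
      ∑ i ∈ A w, G w i ≤ (L + 1) * S.f w + 2 * L * ∑ i ∈ A w, x i := by
    intro w _
    have hlog : Real.log #(A w) ≤ L :=
      Real.log_natCast_le_logb_two ((card_filter_le _ _).trans_eq (card_range n))
    refine ((A w).sum_prefix_div_card_succ_le x (fun l => S.D_nonneg Wstar (v l))
      (S.f_nonneg w)).trans ?_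
    gcongr
    exacts [S.f_nonneg w, sum_nonneg fun i _ => S.D_nonneg Wstar (v i)]
  have hfiber : ∑ i ∈ range n, G (φ i) i = ∑ w ∈ Wstar, ∑ i ∈ A w, G w i := by
    rw [← sum_fiberwise_of_maps_to (fun i _ => hφW i)]
    exact sum_congr rfl fun w _ => sum_congr rfl fun i hi => by rw [(mem_filter.mp hi).2]
  calc ∑ i ∈ range n, c i ≤ ∑ i ∈ range n, x i + ∑ w ∈ Wstar, ∑ i ∈ A w, G w i := by
        rw [← hfiber, ← sum_add_distrib]; exact sum_le_sum hcredit
    _ ≤ ∑ i ∈ range n, x i + ∑ w ∈ Wstar, ((L + 1) * S.f w + 2 * L * ∑ i ∈ A w, x i) := by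
        gcongr with w hw; exact hcluster w hw
    _ = _ := by
        rw [sum_add_distrib, ← mul_sum, ← mul_sum, sum_fiberwise_of_maps_to (fun i _ => hφW i)]
        ring

/-- Lemma 5 of the paper: in every execution of the online algorithm on requests
`v 0, …, v (n-1)` (`n ≥ 1`) with credits `c`, and for every offline cache set `W*`
containing the root, the total credit satisfies
`∑_j ĉ(v_j) ≤ (log₂ n + 1) · ∑_{w ∈ W*} f w + (2 log₂ n + 1) · ∑_j d(W*, v_j)`. -/
theorem caching_credit_bound {X : Type*} [Fintype X] [DecidableEq X]
    (S : CachingSetting X) (n : ℕ) (hn : 1 ≤ n) (v : ℕ → X) (Ws : ℕ → Finset X)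
    (c : ℕ → ℝ) (hexec : S.IsExecutionWithCredits n v Ws c)
    (Wstar : Finset X) (hr : S.r ∈ Wstar) :
    ∑ i ∈ Finset.range n, c i ≤
      (Real.logb 2 (n : ℝ) + 1) * ∑ w ∈ Wstar, S.f w +
        (2 * Real.logb 2 (n : ℝ) + 1) * ∑ j ∈ Finset.range n, S.D Wstar (v j) :=
  caching_credit_bound_general S n v Ws c hexec Wstar hr
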